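/- arXiv:1509.00514 — 3 statements merged into one kernel-verified Lean document; each statement's English description precedes it below -/
import Mathlib

section
/- In a graph G = (V,E) successively partitioned by nested sets P_1 ⊂ … ⊂ P_{n−1} ⊂ V with pairwise disjoint cutsets E_{P_i} and pairwise disjoint cutsets E_{P_iᶜ}, setting S_i = P_i \ P_{i−1} (with P_0 = ∅, P_n = V), there is no edge (u,v) ∈ E with u ∈ S_i and v ∈ S_j whenever |i − j| ≥ 2. -/
/-- The cutset `E_P` of edges entering `P` from its complement. -/
def cutInto {V : Type*} (E : Set (V × V)) (P : Set V) : Set (V × V) :=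
  {e ∈ E | e.1 ∉ P ∧ e.2 ∈ P}

/-- The cutset `E_{Pᶜ}` of edges leaving `P` into its complement. -/
def cutOutOf {V : Type*} (E : Set (V × V)) (P : Set V) : Set (V × V) :=
  {e ∈ E | e.1 ∈ P ∧ e.2 ∉ P}

/-- In a graph successively partitioned by nested sets
`P 1 ⊂ … ⊂ P (n−1) ⊂ V` with pairwise disjoint cutsets `E_{P i}` and pairwise disjoint
cutsets `E_{P iᶜ}`, setting `S i = P i \ P (i−1)` (with `P 0 = ∅`, `P n = V`), there is no
edge `(u,v) ∈ E` with `u ∈ S i` and `v ∈ S j` whenever `|i − j| ≥ 2`. -/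
theorem no_edge_between_far_blocks
    {V : Type*} (E : Set (V × V)) (n : ℕ) (hn : 2 ≤ n)
    (P : ℕ → Set V)
    (hP0 : P 0 = ∅) (hPn : P n = Set.univ)
    (hnested : ∀ i, P i ⊆ P (i + 1))
    (hdisj : ∀ i j, 1 ≤ i → i ≤ n - 1 → 1 ≤ j → j ≤ n - 1 → i ≠ j →
      cutInto E (P i) ∩ cutInto E (P j) = ∅)
    (hdisjC : ∀ i j, 1 ≤ i → i ≤ n - 1 → 1 ≤ j → j ≤ n - 1 → i ≠ j →
      cutOutOf E (P i) ∩ cutOutOf E (P j) = ∅)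
    (S : ℕ → Set V) (hS : ∀ i, S i = P i \ P (i - 1)) :
    ∀ i j, 1 ≤ i → i ≤ n → 1 ≤ j → j ≤ n → (i + 2 ≤ j ∨ j + 2 ≤ i) →
      ∀ u ∈ S i, ∀ v ∈ S j, (u, v) ∉ E := by
  have hmono : Monotone P := monotone_nat_of_le_succ hnested
  intro i j hi1 hin hj1 hjn hfar u hu v hv hE
  rw [hS i] at hu
  rw [hS j] at hv
  obtain ⟨huP, huP'⟩ := hu
  obtain ⟨hvP, hvP'⟩ := hv
  rcases hfar with h | h
  · -- i + 2 ≤ j : edge in cutOutOf (P i) and cutOutOf (P (i+1))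
    have hvk : ∀ k, k ≤ j - 1 → v ∉ P k := fun k hk hmem =>
      hvP' (hmono hk hmem)
    have hmem1 : (u, v) ∈ cutOutOf E (P i) :=
      ⟨hE, huP, hvk i (by omega)⟩
    have hmem2 : (u, v) ∈ cutOutOf E (P (i + 1)) :=
      ⟨hE, hmono (Nat.le_succ i) huP, hvk (i + 1) (by omega)⟩
    have := hdisjC i (i + 1) (by omega) (by omega) (by omega) (by omega) (by omega)
    exact absurd (Set.mem_inter hmem1 hmem2) (by rw [this]; exact not_false)
  · -- j + 2 ≤ i : edge in cutInto (P j) and cutInto (P (j+1))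
    have huk : ∀ k, k ≤ i - 1 → u ∉ P k := fun k hk hmem =>
      huP' (hmono hk hmem)
    have hvk : ∀ k, j ≤ k → v ∈ P k := fun k hk => hmono hk hvP
    have hmem1 : (u, v) ∈ cutInto E (P j) :=
      ⟨hE, huk j (by omega), hvP⟩
    have hmem2 : (u, v) ∈ cutInto E (P (j + 1)) :=
      ⟨hE, huk (j + 1) (by omega), hvk (j + 1) (by omega)⟩
    have := hdisj j (j + 1) (by omega) (by omega) (by omega) (by omega) (by omega)
    exact absurd (Set.mem_inter hmem1 hmem2) (by rw [this]; exact not_false)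
end

section
/- Let η̃ ∈ (0,1), γ ∈ (0,1), and integers n ≥ 4 and T with n−1 ≤ T ≤ 2 + (n−3)γ/η̃. Then the binomial tail term satisfies η̃·(T−n+2)²·B(T−2, n−3, η̃) ≤ ((n−3)²γ²/η̃)·exp(−2(η̃/γ − η̃)²(n−3)), where B(m, k, p) = C(m,k)·p^k·(1−p)^{m−k}. -/
/-!
Chernoff's method bounds a single binomial weight: `B(m,k,p) e^{kt} ≤ (1 - p + p e^t)^m` is one term
of the binomial expansion, and Hoeffding's lemma for a Bernoulli variable gives
`1 - p + p e^t ≤ e^{pt + t²/8}`, so at `t = 4(k - mp)/m` we get `B(m,k,p) ≤ exp(-2(k - mp)²/m)`.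
With `m = T - 2` and `k = n - 3` the constraint on `T` reads `mη ≤ kγ`; hence `k - mη ≥ k(1 - γ)`
and `m ≤ kγ/η`, which turns the exponent into at least `2(η/γ - η)²k`, while the same constraint
gives `T - n + 2 ≤ kγ/η` for the prefactor.
-/

/-- The binomial probability mass function `B(m,k,p) = C(m,k)·p^k·(1−p)^{m−k}`. -/
noncomputable def binomPMF (m k : ℕ) (p : ℝ) : ℝ :=
  (m.choose k : ℝ) * p ^ k * (1 - p) ^ (m - k)

open Real ProbabilityTheory MeasureTheory unitInterval

lemma one_sub_add_mul_exp_le (p : I) (t : ℝ) :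
    1 - p + p * exp t ≤ exp (p * t + t ^ 2 / 8) := by
  have hX : ∀ᵐ x ∂Ber((1 : ℝ), 0, p), x ∈ Set.Icc (0 : ℝ) 1 := by
    rw [bernoulliMeasure_def, ae_add_measure_iff]
    exact ⟨Measure.ae_smul_measure (by simp) _, Measure.ae_smul_measure (by simp) _⟩
  have h := (hasSubgaussianMGF_of_mem_Icc aemeasurable_id hX).mgf_le t
  have hmgf : mgf (fun x ↦ id x - Ber((1 : ℝ), 0, p)[id]) Ber((1 : ℝ), 0, p) t =
      exp (-(p * t)) * (1 - p + p * exp t) := by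
    simp only [mgf, id, integral_bernoulliMeasure, smul_eq_mul, mul_one, mul_zero, add_zero]
    rw [show t * (1 - p) = t + -(p * t) by ring, show t * (0 - p) = -(p * t) by ring, exp_add]
    ring
  have hvar : (((‖(1 : ℝ) - 0‖₊ / 2) ^ 2 : NNReal) : ℝ) * t ^ 2 / 2 = t ^ 2 / 8 := by
    norm_num; ring
  rwa [hmgf, hvar, ← le_div_iff₀' (exp_pos _), ← exp_sub, sub_neg_eq_add, add_comm (t ^ 2 / 8)] at h

section binomPMF

variable {p : ℝ}

lemma binomPMF_nonneg (m k : ℕ) (hp : p ∈ Set.Icc 0 1) : 0 ≤ binomPMF m k p :=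
  mul_nonneg (mul_nonneg (Nat.cast_nonneg _) (pow_nonneg hp.1 _)) (pow_nonneg (sub_nonneg.2 hp.2) _)

lemma binomPMF_mul_exp_le (m k : ℕ) (hp : p ∈ Set.Icc 0 1) (t : ℝ) :
    binomPMF m k p * exp (k * t) ≤ (1 - p + p * exp t) ^ m := by
  have hp0 : 0 ≤ p := hp.1
  have hq : 0 ≤ 1 - p := sub_nonneg.2 hp.2
  rcases le_or_gt k m with hkm | hmk
  · calc binomPMF m k p * exp (k * t) = (p * exp t) ^ k * (1 - p) ^ (m - k) * m.choose k := by
          rw [binomPMF, mul_pow, ← exp_nat_mul]; ring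
      _ ≤ ∑ i ∈ Finset.range (m + 1), (p * exp t) ^ i * (1 - p) ^ (m - i) * m.choose i :=
          Finset.single_le_sum (f := fun i ↦ (p * exp t) ^ i * (1 - p) ^ (m - i) * m.choose i)
            (fun i _ ↦ by positivity) (Finset.mem_range_succ_iff.2 hkm)
      _ = (1 - p + p * exp t) ^ m := by rw [add_comm (1 - p), add_pow]
  · rw [binomPMF, Nat.choose_eq_zero_of_lt hmk]
    simp only [Nat.cast_zero, zero_mul]
    positivity

lemma binomPMF_le_exp (m k : ℕ) (hp : p ∈ Set.Icc 0 1) :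
    binomPMF m k p ≤ exp (-2 * ((k : ℝ) - m * p) ^ 2 / m) := by
  set t : ℝ := 4 * ((k : ℝ) - m * p) / m
  have hexponent : -(k * t) + m * (p * t + t ^ 2 / 8) = -2 * ((k : ℝ) - m * p) ^ 2 / m := by
    rcases eq_or_ne (m : ℝ) 0 with hm | hm
    · simp [t, hm]
    · simp only [t]; field_simp; ring
  calc binomPMF m k p = exp (-(k * t)) * (binomPMF m k p * exp (k * t)) := by
        rw [mul_left_comm, ← exp_add, neg_add_cancel, exp_zero, mul_one]
    _ ≤ exp (-(k * t)) * exp (p * t + t ^ 2 / 8) ^ m := by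
        gcongr
        exact (binomPMF_mul_exp_le m k hp t).trans
          (pow_le_pow_left₀ (by linarith [hp.2, mul_nonneg hp.1 (exp_pos t).le])
            (one_sub_add_mul_exp_le ⟨p, hp⟩ t) m)
    _ = exp (-2 * ((k : ℝ) - m * p) ^ 2 / m) := by
        rw [← exp_nat_mul, ← exp_add, hexponent]

end binomPMF

lemma sq_div_sub_mul_le {η γ k m : ℝ} (hη : 0 < η) (hγ : γ ≤ 1) (hk : 0 < k) (hkm : k ≤ m)
    (hmη : m * η ≤ k * γ) :
    (η / γ - η) ^ 2 * k ≤ (k - m * η) ^ 2 / m := by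
  have hm : 0 < m := hk.trans_le hkm
  have hγ0 : 0 < γ := pos_of_mul_pos_right ((mul_pos hm hη).trans_le hmη) hk.le
  have hηγ : η / γ ≤ 1 := (div_le_one hγ0).2 (le_of_mul_le_mul_left (by nlinarith) hm)
  have hgap : k * (1 - γ) ≤ k - m * η := by nlinarith
  calc (η / γ - η) ^ 2 * k = (η / γ) ^ 2 * (1 - γ) ^ 2 * k := by field_simp
    _ ≤ η / γ * (1 - γ) ^ 2 * k := by gcongr; nlinarith [div_pos hη hγ0]
    _ = (k * (1 - γ)) ^ 2 / (k * γ / η) := by field_simp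
    _ ≤ (k - m * η) ^ 2 / m := by
        gcongr
        exact (le_div_iff₀ hη).2 hmη

lemma mul_sq_le_sq_div {η x c : ℝ} (hη : 0 < η) (hx : 0 ≤ x) (hxc : x ≤ c / η) :
    η * x ^ 2 ≤ c ^ 2 / η := by
  calc η * x ^ 2 ≤ η * (c / η) ^ 2 := by gcongr
    _ = c ^ 2 / η := by field_simp

/-- **Chernoff–Hoeffding bound on the binomial tail term.** For
`η̃, γ ∈ (0,1)`, `n ≥ 4`, and `n−1 ≤ T ≤ 2 + (n−3)γ/η̃`,
`η̃·(T−n+2)²·B(T−2, n−3, η̃) ≤ ((n−3)²γ²/η̃)·exp(−2(η̃/γ − η̃)²(n−3))`. -/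
theorem binomial_tail_chernoff
    (η γ : ℝ) (hη : η ∈ Set.Ioo (0 : ℝ) 1) (hγ : γ ∈ Set.Ioo (0 : ℝ) 1)
    (n T : ℕ) (hn : 4 ≤ n) (hT1 : n - 1 ≤ T)
    (hT2 : (T : ℝ) ≤ 2 + ((n : ℝ) - 3) * γ / η) :
    η * ((T : ℝ) - (n : ℝ) + 2) ^ 2 * binomPMF (T - 2) (n - 3) η ≤
      (((n : ℝ) - 3) ^ 2 * γ ^ 2 / η) *
        Real.exp (-2 * (η / γ - η) ^ 2 * ((n : ℝ) - 3)) := by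
  have hη01 : η ∈ Set.Icc 0 1 := Set.Ioo_subset_Icc_self hη
  have hnR : (4 : ℝ) ≤ n := by exact_mod_cast hn
  have hTR : (n : ℝ) ≤ T + 1 := by exact_mod_cast (by omega : n ≤ T + 1)
  have hm : ((T - 2 : ℕ) : ℝ) = T - 2 := by rw [Nat.cast_sub (by omega)]; norm_num
  have hk : ((n - 3 : ℕ) : ℝ) = n - 3 := by rw [Nat.cast_sub (by omega)]; norm_num
  have hmη : ((T : ℝ) - 2) * η ≤ ((n : ℝ) - 3) * γ := by
    rw [← le_div_iff₀ hη.1]; linarith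
  have hprefactor : η * ((T : ℝ) - n + 2) ^ 2 ≤ ((n : ℝ) - 3) ^ 2 * γ ^ 2 / η := by
    rw [← mul_pow]
    exact mul_sq_le_sq_div hη.1 (by linarith) (by linarith)
  have hpmf : binomPMF (T - 2) (n - 3) η ≤ exp (-2 * (η / γ - η) ^ 2 * ((n : ℝ) - 3)) := by
    refine (binomPMF_le_exp _ _ hη01).trans (exp_le_exp.2 ?_)
    rw [hm, hk, mul_assoc, neg_mul, neg_mul, neg_div, neg_le_neg_iff, mul_div_assoc]
    gcongr
    exact sq_div_sub_mul_le hη.1 hγ.2.le (by linarith) (by linarith) hmη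
  exact mul_le_mul hprefactor hpmf (binomPMF_nonneg _ _ hη01)
    (div_nonneg (by positivity) hη.1.le)
end

section
/- Let (I_{i,t}) for 2 ≤ i ≤ n, t ≥ 0 be nonnegative reals satisfying: I_{i,t} = 0 whenever t ≤ i−2; I_{i,t} ≤ (1−η)·I_{i,t−1} + η·I_{i−1,t−1} for all i ≥ 3 and t ≥ 1; and I_{2,t} ≤ (1−η)·I_{2,t−1} + η·H with I_{2,0} = 0, where η ∈ (0,1) and H ≥ 0. Then for all T ≥ n−1, I_{n,T} ≤ H·(1 − (1−η)^{T−n+2})^{n−1}. -/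
/-- **solving the multi-cutset SDPI recursion.** Let `(I i t)` for
`2 ≤ i ≤ n`, `t ≥ 0` be nonnegative reals with: `I i t = 0` whenever `t ≤ i − 2`;
`I i t ≤ (1−η)·I i (t−1) + η·I (i−1) (t−1)` for `3 ≤ i ≤ n` and `t ≥ 1`; and
`I 2 t ≤ (1−η)·I 2 (t−1) + η·H` with `I 2 0 = 0`. Then for all `T ≥ n−1`,
`I n T ≤ H·(1 − (1−η)^{T−n+2})^{n−1}`. -/
theorem chain_recursion_bound
    (n : ℕ) (hn : 2 ≤ n) (η H : ℝ) (hη : η ∈ Set.Ioo (0 : ℝ) 1) (hH : 0 ≤ H)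
    (I : ℕ → ℕ → ℝ)
    (hnonneg : ∀ i t, 0 ≤ I i t)
    (hzero : ∀ i t, 2 ≤ i → i ≤ n → t ≤ i - 2 → I i t = 0)
    (hrec : ∀ i t, 3 ≤ i → i ≤ n → 1 ≤ t →
      I i t ≤ (1 - η) * I i (t - 1) + η * I (i - 1) (t - 1))
    (hrec2 : ∀ t, 1 ≤ t → I 2 t ≤ (1 - η) * I 2 (t - 1) + η * H) :
    ∀ T, n - 1 ≤ T → I n T ≤ H * (1 - (1 - η) ^ (T - n + 2)) ^ (n - 1) := by
  obtain ⟨hη0, hη1⟩ := hη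
  have h1η0 : (0:ℝ) ≤ 1 - η := by linarith
  have h1η1 : (1:ℝ) - η ≤ 1 := by linarith
  have hple : ∀ k : ℕ, (1 - η) ^ k ≤ 1 := fun k => pow_le_one₀ h1η0 h1η1
  have key : ∀ i, 2 ≤ i → i ≤ n → ∀ t,
      I i t ≤ H * (1 - (1 - η) ^ (t + 2 - i)) ^ (i - 1) := by
    intro i h2
    induction i, h2 using Nat.le_induction with
    | base =>
      intro _ t
      induction t with
      | zero =>
        rw [hzero 2 0 le_rfl hn (by norm_num)]
        norm_num
      | succ t ih =>
        have h := hrec2 (t + 1) (by omega)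
        simp only [Nat.add_sub_cancel] at h ih ⊢
        calc I 2 (t + 1) ≤ (1 - η) * I 2 t + η * H := h
          _ ≤ (1 - η) * (H * (1 - (1 - η) ^ t) ^ 1) + η * H := by
                have := mul_le_mul_of_nonneg_left ih h1η0
                norm_num at this ⊢; linarith
          _ = H * (1 - (1 - η) ^ (t + 1)) ^ 1 := by ring
    | succ i h2i ih =>
      intro hin t
      have hin' : i ≤ n := by omega
      induction t with
      | zero =>
        rw [hzero (i + 1) 0 (by omega) hin (by omega)]
        have h0 : (0:ℝ) ≤ 1 - (1 - η) ^ (0 + 2 - (i + 1)) := by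
          linarith [hple (0 + 2 - (i + 1))]
        exact mul_nonneg hH (pow_nonneg h0 _)
      | succ t iht =>
        by_cases hc : t + 1 ≤ (i + 1) - 2
        · rw [hzero (i + 1) (t + 1) (by omega) hin hc]
          have hexp : (t + 1) + 2 - (i + 1) = 0 := by omega
          rw [hexp]
          simp [zero_pow (show i ≠ 0 by omega)]
        · -- t + 1 ≥ i
          have hti : i ≤ t + 1 := by omega
          have h := hrec (i + 1) (t + 1) (by omega) hin (by omega)
          simp only [Nat.add_sub_cancel] at h
          set a := t + 1 - i with ha
          have hA := iht
          have hB := ih hin' t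
          have he1 : t + 2 - (i + 1) = a := by omega
          have he2 : t + 2 - i = a + 1 := by omega
          have he3 : (t + 1) + 2 - (i + 1) = a + 1 := by omega
          rw [he1] at hA
          rw [he2] at hB
          rw [he3]
          set A : ℝ := 1 - (1 - η) ^ a with hAdef
          set B : ℝ := 1 - (1 - η) ^ (a + 1) with hBdef
          have hA0 : 0 ≤ A := by simp only [hAdef]; linarith [hple a]
          have hAB : A ≤ B := by
            have : (1 - η) ^ (a + 1) ≤ (1 - η) ^ a :=
              pow_le_pow_of_le_one h1η0 h1η1 (Nat.le_succ a)
            simp only [hAdef, hBdef]; linarith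
          have hBeq : B = (1 - η) * A + η := by
            simp only [hAdef, hBdef]; ring
          have hpow : A ^ (i - 1) ≤ B ^ (i - 1) := pow_le_pow_left₀ hA0 hAB _
          have hiexp : i - 1 + 1 = i := by omega
          have hApow : A ^ (i + 1 - 1) = A ^ (i - 1) * A := by
            rw [show i + 1 - 1 = i - 1 + 1 by omega, pow_succ]
          have hBpow : B ^ (i + 1 - 1) = B ^ (i - 1) * B := by
            rw [show i + 1 - 1 = i - 1 + 1 by omega, pow_succ]
          calc I (i + 1) (t + 1) ≤ (1 - η) * I (i + 1) t + η * I i t := h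
            _ ≤ (1 - η) * (H * A ^ (i + 1 - 1)) + η * (H * B ^ (i - 1)) := by
                have h1 := hnonneg (i + 1) t
                have h2 := hnonneg i t
                nlinarith [hA, hB]
            _ ≤ H * B ^ (i + 1 - 1) := by
                rw [hApow, hBpow]
                have hkey2 : H * (B ^ (i - 1) * B)
                    = H * (B ^ (i - 1) * ((1 - η) * A + η)) := by rw [← hBeq]
                nlinarith [hkey2, mul_nonneg hH (mul_nonneg (mul_nonneg h1η0 hA0)
                  (sub_nonneg.2 hpow))]
  intro T hT
  have hk := key n hn le_rfl T
  have hexp : T + 2 - n ≤ T - n + 2 := by omega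
  have hmono : (1 - η) ^ (T - n + 2) ≤ (1 - η) ^ (T + 2 - n) :=
    pow_le_pow_of_le_one h1η0 h1η1 hexp
  have h0 : (0:ℝ) ≤ 1 - (1 - η) ^ (T + 2 - n) := by linarith [hple (T + 2 - n)]
  have hle : (1 - (1 - η) ^ (T + 2 - n)) ≤ 1 - (1 - η) ^ (T - n + 2) := by linarith
  calc I n T ≤ H * (1 - (1 - η) ^ (T + 2 - n)) ^ (n - 1) := hk
    _ ≤ H * (1 - (1 - η) ^ (T - n + 2)) ^ (n - 1) :=
        mul_le_mul_of_nonneg_left (pow_le_pow_left₀ h0 hle _) hH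
end
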